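/- Let K be a complex Hilbert space, P an orthogonal projection on K, s_h(T) := S_h T S_h with S_h := h^{-1/2}(I − P) + P for h > 0, and let Q ∈ B(K). Suppose (Q_h)_{h>0} is a family in B(K) such that ‖s_h(Q_h) − Q‖ → 0 as h → 0. Then ‖s_h(exp(Q_h) − I) − F[Q]‖ → 0 as h → 0, where F[Q] := Q + Q·P·e₂(PQP)·P·Q is the Holevo transform of Q. -/

import Mathlib

open ContinuousLinearMap Filter Topology

noncomputable section

/-- The operator `S_h = h^{-1/2}(I - P) + P`. -/
def scaleOp {K : Type*} [NormedAddCommGroup K] [InnerProductSpace ℂ K]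
    (P : K →L[ℂ] K) (h : ℝ) : K →L[ℂ] K :=
  ((Real.sqrt h : ℂ))⁻¹ • (1 - P) + P

/-- The scaling map `s_h(T) = S_h T S_h`. -/
def scal {K : Type*} [NormedAddCommGroup K] [InnerProductSpace ℂ K]
    (P : K →L[ℂ] K) (h : ℝ) (T : K →L[ℂ] K) : K →L[ℂ] K :=
  scaleOp P h * T * scaleOp P h

/-- `e₂(T) = ∑_{n≥0} Tⁿ/(n+2)!`. -/
def e2 {K : Type*} [NormedAddCommGroup K] [InnerProductSpace ℂ K]
    (T : K →L[ℂ] K) : K →L[ℂ] K :=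
  ∑' n : ℕ, (((n + 2).factorial : ℂ))⁻¹ • T ^ n

/-- The Holevo transform `F[Q] = Q + Q·P·e₂(PQP)·P·Q`. -/
def holevo {K : Type*} [NormedAddCommGroup K] [InnerProductSpace ℂ K]
    (P : K →L[ℂ] K) (Q : K →L[ℂ] K) : K →L[ℂ] K :=
  Q + Q * P * e2 (P * Q * P) * P * Q

/-!
Write `exp X - 1 = X e₁(X)`, where `e_k(X) = ∑ Xⁿ/(n+k)!` is `expTail ℂ k X`. Put
`T_h = S_h⁻¹ = √h (1 - P) + P` and `R_h = s_h(Q_h)`, so that `Q_h = T_h R_h T_h`. Since `T_h` can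
be pushed through a power series, `T e₁(T R T) = e₁(T² R) T`, there is the exact identity
`s_h(exp Q_h - 1) = R_h e₁(T_h² R_h)`. Now `T_h² = h (1 - P) + P → P`, `R_h → Q` and `e₁` is
entire, so the right side tends to `Q e₁(PQ)`; and `Q e₁(PQ) = Q + QPQ e₂(PQ) = F[Q]`, again by
pushing `P` and `Q` through `e₂`.
-/

open NormedSpace

section ExpTail

variable (𝕂 : Type*) {𝔸 : Type*} [RCLike 𝕂] [NormedRing 𝔸] [NormedAlgebra 𝕂 𝔸]

def expTail (k : ℕ) (x : 𝔸) : 𝔸 :=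
  ∑' n : ℕ, (((n + k).factorial : 𝕂))⁻¹ • x ^ n

variable {𝕂}

theorem expTail_eq_ofScalarsSum (k : ℕ) :
    (expTail 𝕂 k : 𝔸 → 𝔸) = FormalMultilinearSeries.ofScalarsSum
      (fun n : ℕ => (((n + k).factorial : 𝕂))⁻¹) :=
  (FormalMultilinearSeries.ofScalarsSum_eq_tsum _).symm

theorem radius_ofScalars_inv_factorial_add (k : ℕ) :
    (FormalMultilinearSeries.ofScalars 𝔸
      (fun n : ℕ => (((n + k).factorial : 𝕂))⁻¹)).radius = ⊤ := by
  refine FormalMultilinearSeries.ofScalars_radius_eq_top_of_tendsto _ _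
    (.of_forall fun n => inv_ne_zero (Nat.cast_ne_zero.mpr (Nat.factorial_ne_zero _))) ?_
  have hratio : ∀ n : ℕ, ‖(((n.succ + k).factorial : 𝕂))⁻¹‖ / ‖(((n + k).factorial : 𝕂))⁻¹‖
      = ((n + k + 1 : ℕ) : ℝ)⁻¹ := by
    intro n
    rw [Nat.succ_add, Nat.factorial_succ]
    simp only [norm_inv, Nat.cast_mul, norm_mul, RCLike.norm_natCast]
    field_simp
  simp_rw [hratio]
  exact tendsto_inv_atTop_zero.comp
    (tendsto_natCast_atTop_atTop.comp (tendsto_add_atTop_nat (k + 1)))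

variable (𝕂) in
theorem expTail_zero : (expTail 𝕂 0 : 𝔸 → 𝔸) = exp := by
  rw [exp_eq_tsum 𝕂]
  rfl

variable [CompleteSpace 𝔸]

variable (𝕂) in
theorem continuous_expTail (k : ℕ) : Continuous (expTail 𝕂 k : 𝔸 → 𝔸) := by
  rw [expTail_eq_ofScalarsSum (𝕂 := 𝕂), ← continuousOn_univ, ← Metric.eball_top_eq_univ (0 : 𝔸),
    ← radius_ofScalars_inv_factorial_add (𝕂 := 𝕂) (𝔸 := 𝔸) k]
  exact FormalMultilinearSeries.continuousOn
    (p := FormalMultilinearSeries.ofScalars 𝔸 fun n : ℕ => (((n + k).factorial : 𝕂))⁻¹)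

theorem summable_inv_factorial_add_smul_pow (k : ℕ) (x : 𝔸) :
    Summable fun n : ℕ => (((n + k).factorial : 𝕂))⁻¹ • x ^ n := by
  refine .of_norm_bounded (norm_expSeries_summable' (𝕂 := 𝕂) x) fun n => ?_
  rw [norm_smul, norm_smul]
  gcongr
  simpa [norm_inv] using inv_anti₀ (by positivity)
    ((Nat.cast_le (α := ℝ)).mpr (Nat.factorial_le (Nat.le_add_right n k)))

theorem expTail_eq_add_mul (k : ℕ) (x : 𝔸) :
    expTail 𝕂 k x = ((k.factorial : 𝕂))⁻¹ • 1 + x * expTail 𝕂 (k + 1) x := by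
  rw [expTail, (summable_inv_factorial_add_smul_pow k x).tsum_eq_zero_add, expTail,
    ← (summable_inv_factorial_add_smul_pow (k + 1) x).tsum_mul_left]
  simp [pow_succ', add_right_comm _ 1 k, add_assoc]

variable (𝕂) in
theorem exp_sub_one_eq_mul_expTail (x : 𝔸) : exp x - 1 = x * expTail 𝕂 1 x := by
  rw [← expTail_zero 𝕂, expTail_eq_add_mul]
  simp

theorem expTail_mul_mul (k : ℕ) (a b : 𝔸) :
    expTail 𝕂 k (a * b) * a = a * expTail 𝕂 k (b * a) := by
  rw [expTail, expTail,
    ← (summable_inv_factorial_add_smul_pow (𝕂 := 𝕂) k (a * b)).tsum_mul_right,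
    ← (summable_inv_factorial_add_smul_pow (𝕂 := 𝕂) k (b * a)).tsum_mul_left]
  simp only [smul_mul_assoc, mul_smul_comm, mul_pow_mul]

variable (𝕂) in
theorem mul_exp_sub_one_mul {S T : 𝔸} (hST : S * T = 1) (hTS : T * S = 1) (x : 𝔸) :
    S * (exp x - 1) * S = S * x * S * expTail 𝕂 1 (T * T * (S * x * S)) := by
  set R := S * x * S
  have hx : x = T * (R * T) := by
    simp only [R, ← mul_assoc, hTS, one_mul]; simp only [mul_assoc, hST, mul_one]
  have hpush := expTail_mul_mul (𝕂 := 𝕂) 1 T (T * R)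
  calc S * (exp x - 1) * S = S * T * (R * (T * expTail 𝕂 1 (T * R * T)) * S) := by
        rw [exp_sub_one_eq_mul_expTail 𝕂, hx]; simp only [mul_assoc]
    _ = R * expTail 𝕂 1 (T * T * R) * (T * S) := by
        rw [hST, ← hpush]; simp only [mul_assoc, one_mul]
    _ = R * expTail 𝕂 1 (T * T * R) := by rw [hTS, mul_one]

end ExpTail

section ComplDilation

variable {R A : Type*} [CommSemiring R] [Ring A] [Algebra R A]

def complDilation (P : A) (a : R) : A := a • (1 - P) + P

theorem complDilation_one (P : A) : complDilation P (1 : R) = 1 := by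
  simp [complDilation]

theorem IsIdempotentElem.complDilation_mul {P : A} (hP : IsIdempotentElem P) (a b : R) :
    complDilation P a * complDilation P b = complDilation P (a * b) := by
  have hPc : (1 - P) * P = 0 := by rw [sub_mul, one_mul, hP.eq, sub_self]
  have hcP : P * (1 - P) = 0 := by rw [mul_sub, mul_one, hP.eq, sub_self]
  simp only [complDilation, add_mul, mul_add, smul_mul_assoc, mul_smul_comm, smul_smul, hPc, hcP,
    hP.one_sub.eq, hP.eq, smul_zero, add_zero, zero_add, mul_comm a b]

end ComplDilation

section Projection

variable {K : Type*} [NormedAddCommGroup K] [InnerProductSpace ℂ K] [CompleteSpace K]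
  {P : K →L[ℂ] K}

theorem holevo_eq_mul_expTail (hP : IsIdempotentElem P) (Q : K →L[ℂ] K) :
    holevo P Q = Q * expTail ℂ 1 (P * Q) := by
  have hPQP : expTail ℂ 2 (P * Q * P) * P = P * expTail ℂ 2 (Q * P) := by
    rw [mul_assoc, expTail_mul_mul, mul_assoc, hP.eq]
  calc holevo P Q = Q + Q * P * (expTail ℂ 2 (Q * P) * Q) := by
        rw [holevo, e2, ← expTail, mul_assoc (Q * P) _ P, hPQP, ← mul_assoc (Q * P) P,
          mul_assoc Q P P, hP.eq, mul_assoc]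
    _ = Q * expTail ℂ 1 (P * Q) := by
        rw [expTail_mul_mul, expTail_eq_add_mul (k := 1)]; simp [mul_add, mul_assoc]

theorem scal_exp_sub_one (hP : IsIdempotentElem P) {h : ℝ} (hh : 0 < h) (X : K →L[ℂ] K) :
    scal P h (exp X - 1) = scal P h X * expTail ℂ 1 (complDilation P (h : ℂ) * scal P h X) := by
  have hsqrt : (Real.sqrt h : ℂ) ≠ 0 := by simpa using Real.sqrt_ne_zero'.mpr hh
  have hS : scaleOp P h = complDilation P (Real.sqrt h : ℂ)⁻¹ := rfl
  have hST : scaleOp P h * complDilation P (Real.sqrt h : ℂ) = 1 := by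
    rw [hS, hP.complDilation_mul, inv_mul_cancel₀ hsqrt, complDilation_one]
  have hTS : complDilation P (Real.sqrt h : ℂ) * scaleOp P h = 1 := by
    rw [hS, hP.complDilation_mul, mul_inv_cancel₀ hsqrt, complDilation_one]
  have hTT : complDilation P (Real.sqrt h : ℂ) * complDilation P (Real.sqrt h : ℂ)
      = complDilation P (h : ℂ) := by
    rw [hP.complDilation_mul, ← Complex.ofReal_mul, Real.mul_self_sqrt hh.le]
  rw [scal, mul_exp_sub_one_mul ℂ hST hTS, hTT, scal]

end Projection

theorem scaled_exponentials_converge_to_holevo_transform_general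
    {K : Type*} [NormedAddCommGroup K] [InnerProductSpace ℂ K] [CompleteSpace K]
    (P : K →L[ℂ] K) (hP2 : P * P = P)
    (Q : K →L[ℂ] K) (Qh : ℝ → K →L[ℂ] K)
    (hcgce : Tendsto (fun h : ℝ => ‖scal P h (Qh h) - Q‖) (𝓝[>] 0) (𝓝 0)) :
    Tendsto (fun h : ℝ => ‖scal P h (NormedSpace.exp (Qh h) - 1) - holevo P Q‖)
      (𝓝[>] 0) (𝓝 0) := by
  have hscal : Tendsto (fun h => scal P h (Qh h)) (𝓝[>] 0) (𝓝 Q) :=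
    tendsto_iff_norm_sub_tendsto_zero.mpr hcgce
  have hdil : Tendsto (fun h : ℝ => complDilation P (h : ℂ)) (𝓝[>] 0) (𝓝 P) := by
    have hcont : Continuous fun h : ℝ => complDilation P (h : ℂ) :=
      (Complex.continuous_ofReal.smul continuous_const).add continuous_const
    simpa [complDilation] using (hcont.tendsto 0).mono_left nhdsWithin_le_nhds
  rw [← tendsto_iff_norm_sub_tendsto_zero, holevo_eq_mul_expTail hP2]
  refine (hscal.mul (((continuous_expTail ℂ 1).tendsto _).comp (hdil.mul hscal))).congr' ?_
  filter_upwards [self_mem_nhdsWithin] with h hh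
  exact (scal_exp_sub_one hP2 hh (Qh h)).symm

theorem scaled_exponentials_converge_to_holevo_transform
    {K : Type*} [NormedAddCommGroup K] [InnerProductSpace ℂ K] [CompleteSpace K]
    (P : K →L[ℂ] K) (hP : IsSelfAdjoint P) (hP2 : P * P = P)
    (Q : K →L[ℂ] K) (Qh : ℝ → K →L[ℂ] K)
    (hcgce : Tendsto (fun h : ℝ => ‖scal P h (Qh h) - Q‖) (𝓝[>] 0) (𝓝 0)) :
    Tendsto (fun h : ℝ => ‖scal P h (NormedSpace.exp (Qh h) - 1) - holevo P Q‖)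
      (𝓝[>] 0) (𝓝 0) :=
  scaled_exponentials_converge_to_holevo_transform_general P hP2 Q Qh hcgce
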